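/- arXiv:2403.01942 — 3 statements merged into one kernel-verified Lean document; each statement's English description precedes it below -/
import Mathlib

section
/- Let x_1, …, x_m be vectors in a real inner product space with ‖x_i‖ ≤ R for all i, let B ≥ 0, and let W = {w : ‖w‖ ≤ B and |⟨w, x_i⟩| ≥ 1 for all i} be nonempty. Then the expectation over a Rademacher vector σ of the supremum, over w ∈ W, of (1/m) ∑_{i=1}^m σ_i · sgn(⟨w, x_i⟩) is at most BR/√m, where sgn(t) = 1 if t > 0 and sgn(t) = −1 if t < 0 (the margin condition |⟨w, x_i⟩| ≥ 1 ensures ⟨w, x_i⟩ ≠ 0). -/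
/-!
The sign function is `1`-Lipschitz on `{t : |t| ≥ 1}`, so under the margin condition the
contraction principle lets us replace each `sgn ⟪w, xᵢ⟫` by `⟪w, xᵢ⟫`, one coordinate at a time:
pairing each sign vector `σ` with the one flipped at the current coordinate reduces this to
`sup (a + p) + sup (a - p) ≤ sup (a + s) + sup (a - s)` whenever `p` is dominated by `s`.
For the linear class, `sup_w ∑ σᵢ ⟪w, xᵢ⟫ ≤ B ‖∑ σᵢ xᵢ‖`, and by Cauchy–Schwarz and the
orthogonality of Rademacher signs, `𝔼 ‖∑ σᵢ xᵢ‖ ≤ (𝔼 ‖∑ σᵢ xᵢ‖²)^{1/2} = (∑ ‖xᵢ‖²)^{1/2} ≤ √m R`.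
-/

open Finset
open scoped RealInnerProductSpace

def boolSign (b : Bool) : ℝ := if b then 1 else -1

@[simp] lemma boolSign_true : boolSign true = 1 := rfl

@[simp] lemma boolSign_false : boolSign false = -1 := rfl

@[simp] lemma boolSign_not (b : Bool) : boolSign (!b) = -boolSign b := by
  cases b <;> simp

@[simp] lemma abs_boolSign (b : Bool) : |boolSign b| = 1 := by
  cases b <;> simp

@[simp] lemma boolSign_mul_self (b : Bool) : boolSign b * boolSign b = 1 := by
  cases b <;> simp

lemma Real.abs_sign_le_one (t : ℝ) : |Real.sign t| ≤ 1 := by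
  rcases Real.sign_apply_eq t with h | h | h <;> simp [h]

lemma Real.abs_sign_sub_sign_le_of_one_le_abs {a b : ℝ} (ha : 1 ≤ |a|) (hb : 1 ≤ |b|) :
    |Real.sign a - Real.sign b| ≤ |a - b| := by
  rcases le_abs'.mp ha with ha | ha <;> rcases le_abs'.mp hb with hb | hb
  · simp [Real.sign_of_neg (by linarith : a < 0), Real.sign_of_neg (by linarith : b < 0)]
  · rw [Real.sign_of_neg (by linarith), Real.sign_of_pos (by linarith), abs_of_neg (by linarith),
      abs_of_neg (by linarith)]
    linarith
  · rw [Real.sign_of_pos (by linarith), Real.sign_of_neg (by linarith), abs_of_pos (by linarith),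
      abs_of_pos (by linarith)]
    linarith
  · simp [Real.sign_of_pos (by linarith : 0 < a), Real.sign_of_pos (by linarith : 0 < b)]

lemma ciSup_add_add_ciSup_sub_le {ι : Type*} [Nonempty ι] {a p s : ι → ℝ}
    (hps : ∀ w v, |p w - p v| ≤ |s w - s v|)
    (hadd : BddAbove (Set.range fun w => a w + s w))
    (hsub : BddAbove (Set.range fun w => a w - s w)) :
    (⨆ w, a w + p w) + (⨆ w, a w - p w) ≤ (⨆ w, a w + s w) + (⨆ w, a w - s w) := by
  refine ciSup_add_ciSup_le fun w v => ?_
  have hp := (le_abs_self _).trans (hps w v)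
  rcases le_total (s v) (s w) with hvw | hwv
  · rw [abs_of_nonneg (sub_nonneg.mpr hvw)] at hp
    linarith [le_ciSup hadd w, le_ciSup hsub v]
  · rw [abs_of_nonpos (sub_nonpos.mpr hwv)] at hp
    linarith [le_ciSup hadd v, le_ciSup hsub w]

section Rademacher

variable {m : ℕ}

lemma sum_comp_update_not {M : Type*} [AddCommMonoid M] (j : Fin m) (F : (Fin m → Bool) → M) :
    ∑ σ, F (Function.update σ j (!σ j)) = ∑ σ, F σ := by
  have hflip : Function.Involutive fun σ : Fin m → Bool => Function.update σ j (!σ j) := by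
    intro σ
    simp
  exact Fintype.sum_bijective _ hflip.bijective _ _ fun _ => rfl

lemma sum_boolSign_mul_boolSign (i i' : Fin m) :
    ∑ σ : Fin m → Bool, boolSign (σ i) * boolSign (σ i') = if i = i' then 2 ^ m else 0 := by
  split_ifs with h
  · simp [h, card_univ]
  · have hflip := sum_comp_update_not i fun σ => boolSign (σ i) * boolSign (σ i')
    simp only [Function.update_self, Function.update_of_ne (Ne.symm h), boolSign_not, neg_mul,
      sum_neg_distrib] at hflip
    linarith

variable {E : Type*} [NormedAddCommGroup E] [InnerProductSpace ℝ E]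

lemma sum_norm_sum_boolSign_smul_sq (x : Fin m → E) :
    ∑ σ : Fin m → Bool, ‖∑ i, boolSign (σ i) • x i‖ ^ 2 = 2 ^ m * ∑ i, ‖x i‖ ^ 2 := by
  have hexpand : ∀ σ : Fin m → Bool, ‖∑ i, boolSign (σ i) • x i‖ ^ 2
      = ∑ i, ∑ i', boolSign (σ i) * boolSign (σ i') * ⟪x i, x i'⟫ := fun σ => by
    rw [← real_inner_self_eq_norm_sq, sum_inner]
    simp only [inner_sum, real_inner_smul_left, real_inner_smul_right, mul_left_comm, mul_assoc]
  simp only [hexpand]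
  rw [sum_comm]
  simp only [sum_comm (γ := Fin m → Bool), ← sum_mul, sum_boolSign_mul_boolSign, ite_mul, zero_mul,
    sum_ite_eq, mem_univ, if_true, real_inner_self_eq_norm_sq, mul_sum]

lemma sum_norm_sum_boolSign_smul_le (x : Fin m → E) {R : ℝ} (hR : ∀ i, ‖x i‖ ≤ R) :
    ∑ σ : Fin m → Bool, ‖∑ i, boolSign (σ i) • x i‖ ≤ 2 ^ m * (√m * R) := by
  have hR₀ : 0 ≤ √m * R := by
    rcases Nat.eq_zero_or_pos m with rfl | hm
    · simp
    · exact mul_nonneg (Real.sqrt_nonneg _) ((norm_nonneg _).trans (hR ⟨0, hm⟩))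
  refine abs_le_of_sq_le_sq' ?_ (by positivity) |>.2
  calc (∑ σ : Fin m → Bool, ‖∑ i, boolSign (σ i) • x i‖) ^ 2
      ≤ 2 ^ m * ∑ σ : Fin m → Bool, ‖∑ i, boolSign (σ i) • x i‖ ^ 2 := by
        simpa [card_univ] using sq_sum_le_card_mul_sum_sq (s := univ)
          (f := fun σ : Fin m → Bool => ‖∑ i, boolSign (σ i) • x i‖)
    _ = 2 ^ m * (2 ^ m * ∑ i, ‖x i‖ ^ 2) := by rw [sum_norm_sum_boolSign_smul_sq]
    _ ≤ 2 ^ m * (2 ^ m * ∑ _i : Fin m, R ^ 2) := by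
        gcongr with i
        exact hR i
    _ = (2 ^ m * (√m * R)) ^ 2 := by
        simp [mul_pow, Real.sq_sqrt (Nat.cast_nonneg m)]
        ring

/-- `m * 2 ^ m` times the empirical Rademacher complexity of the vectors `f w ∈ ℝ^m`. -/
noncomputable def rademacherSupSum {ι : Type*} (f : ι → Fin m → ℝ) : ℝ :=
  ∑ σ : Fin m → Bool, ⨆ w, ∑ i, boolSign (σ i) * f w i

variable {ι : Type*}

lemma bddAbove_range_sum_boolSign_mul {f : ι → Fin m → ℝ} {C : ℝ} (hf : ∀ w i, |f w i| ≤ C)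
    (σ : Fin m → Bool) : BddAbove (Set.range fun w => ∑ i, boolSign (σ i) * f w i) := by
  refine ⟨∑ _i : Fin m, C, ?_⟩
  rintro _ ⟨w, rfl⟩
  refine sum_le_sum fun i _ => (le_abs_self _).trans ?_
  rw [abs_mul, abs_boolSign, one_mul]
  exact hf w i

variable [Nonempty ι]

lemma rademacherSupSum_le_of_forall_ne {g h : ι → Fin m → ℝ} (j : Fin m)
    (hne : ∀ w, ∀ i ≠ j, g w i = h w i)
    (hj : ∀ w v, |g w j - g v j| ≤ |h w j - h v j|)
    (hh : ∀ σ : Fin m → Bool, BddAbove (Set.range fun w => ∑ i, boolSign (σ i) * h w i)) :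
    rademacherSupSum g ≤ rademacherSupSum h := by
  have hpair (σ : Fin m → Bool) :
      (⨆ w, ∑ i, boolSign (σ i) * g w i)
          + (⨆ w, ∑ i, boolSign (Function.update σ j (!σ j) i) * g w i)
        ≤ (⨆ w, ∑ i, boolSign (σ i) * h w i)
          + (⨆ w, ∑ i, boolSign (Function.update σ j (!σ j) i) * h w i) := by
    have hsplit : ∀ (f : ι → Fin m → ℝ) w, ∑ i, boolSign (σ i) * f w i
        = ∑ i ∈ univ.erase j, boolSign (σ i) * f w i + boolSign (σ j) * f w j :=
      fun f w => (sum_erase_add _ _ (mem_univ j)).symm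
    have hsplit_flip : ∀ (f : ι → Fin m → ℝ) w, ∑ i, boolSign (Function.update σ j (!σ j) i) * f w i
        = ∑ i ∈ univ.erase j, boolSign (σ i) * f w i - boolSign (σ j) * f w j := by
      intro f w
      rw [← sum_erase_add _ _ (mem_univ j),
        sum_congr rfl fun i hi => by rw [Function.update_of_ne (ne_of_mem_erase hi)]]
      simp only [Function.update_self, boolSign_not]
      ring
    have hrest : ∀ w, ∑ i ∈ univ.erase j, boolSign (σ i) * g w i
        = ∑ i ∈ univ.erase j, boolSign (σ i) * h w i :=
      fun w => sum_congr rfl fun i hi => by rw [hne w i (ne_of_mem_erase hi)]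
    simp only [hsplit, hsplit_flip, hrest]
    refine ciSup_add_add_ciSup_sub_le (fun w v => ?_) ?_ ?_
    · rw [← mul_sub, ← mul_sub, abs_mul, abs_mul, abs_boolSign, one_mul, one_mul]
      exact hj w v
    · simpa only [hsplit] using hh σ
    · simpa only [hsplit_flip] using hh (Function.update σ j (!σ j))
  have hsum := sum_le_sum fun σ (_ : σ ∈ univ) => hpair σ
  have hg := sum_comp_update_not j fun σ => ⨆ w, ∑ i, boolSign (σ i) * g w i
  have hh := sum_comp_update_not j fun σ => ⨆ w, ∑ i, boolSign (σ i) * h w i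
  rw [sum_add_distrib, sum_add_distrib] at hsum
  unfold rademacherSupSum
  linarith

/-- The Ledoux–Talagrand contraction principle. -/
theorem rademacherSupSum_le_of_abs_sub_le {g h : ι → Fin m → ℝ} {C : ℝ}
    (hg : ∀ w i, |g w i| ≤ C) (hh : ∀ w i, |h w i| ≤ C)
    (hgh : ∀ w v i, |g w i - g v i| ≤ |h w i - h v i|) :
    rademacherSupSum g ≤ rademacherSupSum h := by
  classical
  suffices ∀ s : Finset (Fin m),
      rademacherSupSum (fun w => s.piecewise (g w) (h w)) ≤ rademacherSupSum h by
    simpa using this univ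
  intro s
  induction s using Finset.induction_on with
  | empty => simp
  | insert j s hj ih =>
    refine le_trans (rademacherSupSum_le_of_forall_ne j (fun w i hi => ?_) (fun w v => ?_)
      (bddAbove_range_sum_boolSign_mul (C := C) (fun w i => ?_))) ih
    · simp [piecewise, hi]
    · simp only [piecewise_insert_self, piecewise_eq_of_notMem _ _ _ hj]
      exact hgh w v j
    · by_cases hi : i ∈ s <;> simp [piecewise, hi, hg, hh]

lemma rademacherSupSum_inner_le (w : ι → E) (x : Fin m → E) {B : ℝ} (hw : ∀ k, ‖w k‖ ≤ B) :
    rademacherSupSum (fun k i => ⟪w k, x i⟫)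
      ≤ B * ∑ σ : Fin m → Bool, ‖∑ i, boolSign (σ i) • x i‖ := by
  rw [rademacherSupSum, mul_sum]
  refine sum_le_sum fun σ _ => ciSup_le fun k => ?_
  calc ∑ i, boolSign (σ i) * ⟪w k, x i⟫ = ⟪w k, ∑ i, boolSign (σ i) • x i⟫ := by
        simp only [inner_sum, real_inner_smul_right]
    _ ≤ ‖w k‖ * ‖∑ i, boolSign (σ i) • x i‖ := real_inner_le_norm _ _
    _ ≤ B * ‖∑ i, boolSign (σ i) • x i‖ := by gcongr; exact hw k

lemma rademacherSupSum_sign_inner_le (w : ι → E) (x : Fin m → E) {B R : ℝ}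
    (hw : ∀ k, ‖w k‖ ≤ B) (hmargin : ∀ k i, 1 ≤ |⟪w k, x i⟫|) (hR : ∀ i, ‖x i‖ ≤ R) :
    rademacherSupSum (fun k i => Real.sign ⟪w k, x i⟫) ≤ B * (2 ^ m * (√m * R)) := by
  have hB : 0 ≤ B := (norm_nonneg _).trans (hw (Classical.arbitrary ι))
  have hinner (k : ι) (i : Fin m) : |⟪w k, x i⟫| ≤ B * R :=
    (abs_real_inner_le_norm _ _).trans (mul_le_mul (hw k) (hR i) (norm_nonneg _) hB)
  calc rademacherSupSum (fun k i => Real.sign ⟪w k, x i⟫)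
      ≤ rademacherSupSum (fun k i => ⟪w k, x i⟫) :=
        rademacherSupSum_le_of_abs_sub_le (C := max 1 (B * R))
          (fun _ _ => (Real.abs_sign_le_one _).trans (le_max_left _ _))
          (fun k i => (hinner k i).trans (le_max_right _ _))
          (fun k l i => Real.abs_sign_sub_sign_le_of_one_le_abs (hmargin k i) (hmargin l i))
    _ ≤ B * ∑ σ : Fin m → Bool, ‖∑ i, boolSign (σ i) • x i‖ := rademacherSupSum_inner_le w x hw
    _ ≤ B * (2 ^ m * (√m * R)) := by gcongr; exact sum_norm_sum_boolSign_smul_le x hR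

end Rademacher

theorem rademacher_complexity_sign_class_le_general
    {E : Type*} [NormedAddCommGroup E] [InnerProductSpace ℝ E]
    (m : ℕ) (x : Fin m → E) (R B : ℝ)
    (hR : ∀ i, ‖x i‖ ≤ R)
    (hW : ∃ w : E, ‖w‖ ≤ B ∧ ∀ i, 1 ≤ |⟪w, x i⟫|) :
    (∑ σ : Fin m → Bool,
        ⨆ w : {w : E // ‖w‖ ≤ B ∧ ∀ i, 1 ≤ |⟪w, x i⟫|},
          (1 / (m : ℝ)) * ∑ i, (if σ i then (1 : ℝ) else -1) * Real.sign ⟪(w : E), x i⟫)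
        / 2 ^ m
      ≤ B * R / Real.sqrt m := by
  obtain ⟨w₀, hw₀⟩ := hW
  have : Nonempty {w : E // ‖w‖ ≤ B ∧ ∀ i, 1 ≤ |⟪w, x i⟫|} := ⟨⟨w₀, hw₀⟩⟩
  calc _ = 1 / (m : ℝ) * (∑ σ : Fin m → Bool,
        ⨆ w : {w : E // ‖w‖ ≤ B ∧ ∀ i, 1 ≤ |⟪w, x i⟫|},
          ∑ i, (if σ i then (1 : ℝ) else -1) * Real.sign ⟪(w : E), x i⟫) / 2 ^ m := by
        simp only [mul_sum, Real.mul_iSup_of_nonneg (by positivity : (0 : ℝ) ≤ 1 / m)]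
    _ ≤ 1 / (m : ℝ) * (B * (2 ^ m * (√m * R))) / 2 ^ m := by
        gcongr
        exact rademacherSupSum_sign_inner_le Subtype.val x (fun w => w.2.1) (fun w => w.2.2) hR
    _ = B * R / √m := by
        rw [div_eq_iff (by positivity), div_eq_mul_one_div (B * R), ← Real.sqrt_div_self']
        ring

/-- Empirical Rademacher complexity of the margin-constrained linear sign-classifier class
`H = {x ↦ sgn⟪w, x⟫ : ‖w‖ ≤ B, |⟪w, x i⟫| ≥ 1 for all i}` on a sample
`x 0, …, x (m-1)` with `‖x i‖ ≤ R` is at most `B * R / √m`.  The Rademacher vector is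
encoded as `σ : Fin m → Bool` (`true ↦ 1`, `false ↦ -1`), uniform over `{-1,1}^m`;
`Real.sign t` equals `1` for `t > 0` and `-1` for `t < 0` (the margin condition ensures
`⟪w, x i⟫ ≠ 0`). -/
theorem rademacher_complexity_sign_class_le
    {E : Type*} [NormedAddCommGroup E] [InnerProductSpace ℝ E]
    (m : ℕ) (hm : 0 < m) (x : Fin m → E) (R B : ℝ)
    (hR : ∀ i, ‖x i‖ ≤ R) (hB : 0 ≤ B)
    (hW : ∃ w : E, ‖w‖ ≤ B ∧ ∀ i, 1 ≤ |⟪w, x i⟫|) :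
    (∑ σ : Fin m → Bool,
        ⨆ w : {w : E // ‖w‖ ≤ B ∧ ∀ i, 1 ≤ |⟪w, x i⟫|},
          (1 / (m : ℝ)) * ∑ i, (if σ i then (1 : ℝ) else -1) * Real.sign ⟪(w : E), x i⟫)
        / 2 ^ m
      ≤ B * R / Real.sqrt m :=
  rademacher_complexity_sign_class_le_general m x R B hR hW
end

section
/- Let p and e be probability densities with respect to a σ-finite measure ν on a measurable space Z, let α ∈ [0,1], define the mixture density q = α p + (1−α) e, and let L : Z → ℝ be measurable with 0 ≤ L(z) ≤ 1 for all z. Then ∫ L p dν ≤ ∫ L q dν + (1−α) √(1 − exp(−D_KL(p‖e))). -/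
open MeasureTheory
open scoped Classical ENNReal

/-- The Kullback–Leibler divergence `D_KL(p‖q) = ∫ p log(p/q) dν` between two densities
`p, q` w.r.t. a measure `ν`, taken to be `+∞` if the measure with density `p` is not
absolutely continuous w.r.t. the measure with density `q`, or if the defining integrand
is not integrable (in which case the integral diverges to `+∞`). -/
noncomputable def klDiv {Z : Type*} [MeasurableSpace Z] (ν : Measure Z) (p q : Z → ℝ) :
    ℝ≥0∞ :=
  if (ν.withDensity fun z => ENNReal.ofReal (p z)) ≪
        (ν.withDensity fun z => ENNReal.ofReal (q z)) ∧
      Integrable (fun z => p z * Real.log (p z / q z)) ν then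
    ENNReal.ofReal (∫ z, p z * Real.log (p z / q z) ∂ν)
  else ∞

/-- `expNeg x = exp (-x)` for `x : ℝ≥0∞`, with the convention `exp (-∞) = 0`. -/
noncomputable def expNeg (x : ℝ≥0∞) : ℝ :=
  if x = ∞ then 0 else Real.exp (-x.toReal)

/-! Since `q = α p + (1 - α) e`, the gap `∫ L p - ∫ L q` is `(1 - α) (∫ L p - ∫ L e)`, and for
`0 ≤ L ≤ 1` this is at most `(1 - α) (1 - m)` with `m = ∫ min p e`. The Bretagnolle–Huber
inequality `exp (-D_KL(p‖e)) ≤ m (2 - m)` turns `1 - m` into `√(1 - exp (-D_KL(p‖e)))`. It comes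
from Jensen's inequality under the probability measure `p ν`, which gives
`exp (-D_KL(p‖e) / 2) ≤ ∫ √(p e)`, and Cauchy–Schwarz applied to `√(p e) = √(min p e * max p e)`,
using `∫ max p e = 2 - m`. -/

lemma mul_sqrt_div_self_eq {a b : ℝ} (ha : 0 ≤ a) : a * √(b / a) = √(a * b) := by
  rcases ha.eq_or_lt with rfl | ha
  · simp
  · rw [← Real.sqrt_sq ha.le, ← Real.sqrt_mul (sq_nonneg a), Real.sqrt_sq ha.le]
    congr 1
    field_simp

section
variable {Z : Type*} [MeasurableSpace Z] {ν : Measure Z}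

lemma integral_sqrt_mul_le {f g : Z → ℝ} (hf0 : ∀ z, 0 ≤ f z) (hg0 : ∀ z, 0 ≤ g z)
    (hf : Integrable f ν) (hg : Integrable g ν) :
    ∫ z, √(f z * g z) ∂ν ≤ √(∫ z, f z ∂ν) * √(∫ z, g z ∂ν) := by
  have hmemLp : ∀ {h : Z → ℝ}, (∀ z, 0 ≤ h z) → Integrable h ν →
      MemLp (fun z => √(h z)) (ENNReal.ofReal 2) ν := fun {h} h0 hi => by
    rw [ENNReal.ofReal_ofNat,
      memLp_two_iff_integrable_sq hi.1.aemeasurable.sqrt.aestronglyMeasurable]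
    simpa only [Real.sq_sqrt (h0 _)] using hi
  have holder := integral_mul_le_Lp_mul_Lq_of_nonneg Real.HolderConjugate.two_two
    (ae_of_all _ fun z => Real.sqrt_nonneg (f z)) (ae_of_all _ fun z => Real.sqrt_nonneg (g z))
    (hmemLp hf0 hf) (hmemLp hg0 hg)
  simpa only [Real.rpow_two, Real.sq_sqrt (hf0 _), Real.sq_sqrt (hg0 _), ← Real.sqrt_eq_rpow,
    ← Real.sqrt_mul (hf0 _)] using holder

variable {p : Z → ℝ}

lemma integral_withDensity_ofReal (hpm : Measurable p) (hp0 : ∀ z, 0 ≤ p z) (g : Z → ℝ) :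
    ∫ z, g z ∂ν.withDensity (fun z => ENNReal.ofReal (p z)) = ∫ z, p z * g z ∂ν := by
  rw [integral_withDensity_eq_integral_toReal_smul hpm.ennreal_ofReal
    (ae_of_all _ fun _ => ENNReal.ofReal_lt_top)]
  simp only [ENNReal.toReal_ofReal (hp0 _), smul_eq_mul]

lemma integrable_withDensity_ofReal_iff (hpm : Measurable p) (hp0 : ∀ z, 0 ≤ p z) {g : Z → ℝ} :
    Integrable g (ν.withDensity fun z => ENNReal.ofReal (p z)) ↔
      Integrable (fun z => p z * g z) ν := by
  rw [integrable_withDensity_iff_integrable_smul' hpm.ennreal_ofReal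
    (ae_of_all _ fun _ => ENNReal.ofReal_lt_top)]
  simp only [ENNReal.toReal_ofReal (hp0 _), smul_eq_mul]

lemma isProbabilityMeasure_withDensity_ofReal (hp0 : ∀ z, 0 ≤ p z) (hp1 : ∫ z, p z ∂ν = 1) :
    IsProbabilityMeasure (ν.withDensity fun z => ENNReal.ofReal (p z)) := by
  constructor
  rw [withDensity_apply _ MeasurableSet.univ, Measure.restrict_univ,
    ← ofReal_integral_eq_lintegral_ofReal (.of_integral_ne_zero (by simp [hp1]))
      (ae_of_all _ hp0), hp1, ENNReal.ofReal_one]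

lemma ae_withDensity_ofReal_pos (hpm : Measurable p) :
    ∀ᵐ z ∂ν.withDensity (fun z => ENNReal.ofReal (p z)), 0 < p z := by
  rw [ae_withDensity_iff hpm.ennreal_ofReal]
  exact ae_of_all _ fun z hz => not_le.mp (mt ENNReal.ofReal_eq_zero.mpr hz)

lemma integrable_mul_of_nonneg_of_le_one {L f : Z → ℝ} (hLm : Measurable L)
    (hL0 : ∀ z, 0 ≤ L z) (hL1 : ∀ z, L z ≤ 1) (hf : Integrable f ν) :
    Integrable (fun z => L z * f z) ν :=
  hf.bdd_mul hLm.aestronglyMeasurable <| ae_of_all _ fun z => by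
    rw [Real.norm_of_nonneg (hL0 z)]; exact hL1 z

lemma integrable_sqrt_mul {f g : Z → ℝ} (hf0 : ∀ z, 0 ≤ f z) (hg0 : ∀ z, 0 ≤ g z)
    (hf : Integrable f ν) (hg : Integrable g ν) : Integrable (fun z => √(f z * g z)) ν := by
  refine (hf.add hg).mono' (hf.1.mul hg.1).aemeasurable.sqrt.aestronglyMeasurable
    (ae_of_all _ fun z => ?_)
  rw [Real.norm_of_nonneg (Real.sqrt_nonneg _), Pi.add_apply]
  exact Real.sqrt_le_iff.mpr ⟨add_nonneg (hf0 z) (hg0 z), by nlinarith [hf0 z, hg0 z]⟩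

/-- Jensen's inequality for `exp` under the probability measure `p ν`, applied to
`½ log (e / p)`. -/
lemma exp_neg_half_integral_mul_log_div_le_integral_sqrt_mul {e : Z → ℝ} (hpm : Measurable p)
    (hem : Measurable e) (hp0 : ∀ z, 0 ≤ p z) (he0 : ∀ z, 0 ≤ e z) (hp1 : ∫ z, p z ∂ν = 1)
    (he : Integrable e ν)
    (hac : (ν.withDensity fun z => ENNReal.ofReal (p z)) ≪
      (ν.withDensity fun z => ENNReal.ofReal (e z)))
    (hint : Integrable (fun z => p z * Real.log (p z / e z)) ν) :
    Real.exp (-(∫ z, p z * Real.log (p z / e z) ∂ν) / 2) ≤ ∫ z, √(p z * e z) ∂ν := by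
  set μ := ν.withDensity fun z => ENNReal.ofReal (p z)
  have := isProbabilityMeasure_withDensity_ofReal hp0 hp1
  set h : Z → ℝ := fun z => Real.log (e z / p z) / 2
  have hp_mul_h : ∀ z, p z * h z = -(p z * Real.log (p z / e z)) / 2 := fun z => by
    simp only [h, ← inv_div (p z), Real.log_inv]; ring
  have hp_mul_sqrt : ∀ z, p z * √(e z / p z) = √(p z * e z) := fun z =>
    mul_sqrt_div_self_eq (hp0 z)
  have hexp_h : ∀ᵐ z ∂μ, Real.exp (h z) = √(e z / p z) := by
    filter_upwards [ae_withDensity_ofReal_pos hpm, hac.ae_le (ae_withDensity_ofReal_pos hem)]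
      with z hpz hez
    rw [show h z = Real.log √(e z / p z) from (Real.log_sqrt (div_pos hez hpz).le).symm,
      Real.exp_log (Real.sqrt_pos.mpr (div_pos hez hpz))]
  have hh_int : Integrable h μ := by
    rw [integrable_withDensity_ofReal_iff hpm hp0]
    exact (hint.neg.div_const 2).congr (ae_of_all _ fun z => (hp_mul_h z).symm)
  have hexp_int : Integrable (fun z => Real.exp (h z)) μ := by
    refine Integrable.congr ?_ (hexp_h.mono fun z hz => hz.symm)
    rw [integrable_withDensity_ofReal_iff hpm hp0]
    simpa only [hp_mul_sqrt] using
      integrable_sqrt_mul hp0 he0 (.of_integral_ne_zero (by simp [hp1])) he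
  have jensen := convexOn_exp.map_integral_le Real.continuous_exp.continuousOn isClosed_univ
    (ae_of_all _ fun z => Set.mem_univ (h z)) hh_int hexp_int
  rw [integral_congr_ae hexp_h, integral_withDensity_ofReal hpm hp0,
    integral_withDensity_ofReal hpm hp0] at jensen
  simpa only [hp_mul_h, hp_mul_sqrt, integral_div, integral_neg] using jensen

lemma integral_mul_sub_integral_mul_le {L e : Z → ℝ} (hLm : Measurable L)
    (hL0 : ∀ z, 0 ≤ L z) (hL1 : ∀ z, L z ≤ 1) (hp : Integrable p ν) (he : Integrable e ν) :
    ∫ z, L z * p z ∂ν - ∫ z, L z * e z ∂ν ≤ ∫ z, p z ∂ν - ∫ z, min (p z) (e z) ∂ν := by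
  have hLp := integrable_mul_of_nonneg_of_le_one hLm hL0 hL1 hp
  have hLe := integrable_mul_of_nonneg_of_le_one hLm hL0 hL1 he
  have hmin : Integrable (fun z => min (p z) (e z)) ν := hp.inf he
  rw [← integral_sub hLp hLe, ← integral_sub hp hmin]
  refine integral_mono (hLp.sub hLe) (hp.sub hmin) fun z => ?_
  rcases le_total (p z) (e z) with hpe | hep
  · rw [min_eq_left hpe]; nlinarith [hL0 z]
  · rw [min_eq_right hep]; nlinarith [hL1 z]

/-- Bretagnolle–Huber inequality. -/
theorem exp_neg_integral_mul_log_div_le {e : Z → ℝ} (hpm : Measurable p) (hem : Measurable e)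
    (hp0 : ∀ z, 0 ≤ p z) (he0 : ∀ z, 0 ≤ e z) (hp1 : ∫ z, p z ∂ν = 1) (he1 : ∫ z, e z ∂ν = 1)
    (hac : (ν.withDensity fun z => ENNReal.ofReal (p z)) ≪
      (ν.withDensity fun z => ENNReal.ofReal (e z)))
    (hint : Integrable (fun z => p z * Real.log (p z / e z)) ν) :
    Real.exp (-∫ z, p z * Real.log (p z / e z) ∂ν)
      ≤ (∫ z, min (p z) (e z) ∂ν) * (2 - ∫ z, min (p z) (e z) ∂ν) := by
  have hp : Integrable p ν := .of_integral_ne_zero (by simp [hp1])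
  have he : Integrable e ν := .of_integral_ne_zero (by simp [he1])
  have hmin : Integrable (fun z => min (p z) (e z)) ν := hp.inf he
  have hmax : Integrable (fun z => max (p z) (e z)) ν := hp.sup he
  have hmin_add_max : ∫ z, min (p z) (e z) ∂ν + ∫ z, max (p z) (e z) ∂ν = 2 := by
    rw [← integral_add hmin hmax]
    simp_rw [min_add_max]
    rw [integral_add hp he, hp1, he1]; norm_num
  have hcs := integral_sqrt_mul_le (fun z => le_min (hp0 z) (he0 z))
    (fun z => (hp0 z).trans (le_max_left _ _)) hmin hmax
  simp_rw [min_mul_max] at hcs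
  have hbc :=
    exp_neg_half_integral_mul_log_div_le_integral_sqrt_mul hpm hem hp0 he0 hp1 he hac hint
  calc Real.exp (-∫ z, p z * Real.log (p z / e z) ∂ν)
      = Real.exp (-(∫ z, p z * Real.log (p z / e z) ∂ν) / 2) ^ 2 := by
        rw [← Real.exp_nat_mul]; congr 1; ring
    _ ≤ (∫ z, √(p z * e z) ∂ν) ^ 2 := pow_le_pow_left₀ (Real.exp_nonneg _) hbc 2
    _ ≤ (√(∫ z, min (p z) (e z) ∂ν) * √(∫ z, max (p z) (e z) ∂ν)) ^ 2 :=
        pow_le_pow_left₀ (integral_nonneg fun z => Real.sqrt_nonneg _) hcs 2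
    _ = (∫ z, min (p z) (e z) ∂ν) * (2 - ∫ z, min (p z) (e z) ∂ν) := by
        rw [mul_pow, Real.sq_sqrt (integral_nonneg fun z => le_min (hp0 z) (he0 z)),
          Real.sq_sqrt (integral_nonneg fun z => (hp0 z).trans (le_max_left _ _)),
          ← hmin_add_max, add_sub_cancel_left]

lemma expNeg_klDiv_le {e : Z → ℝ} (hpm : Measurable p) (hem : Measurable e)
    (hp0 : ∀ z, 0 ≤ p z) (he0 : ∀ z, 0 ≤ e z) (hp1 : ∫ z, p z ∂ν = 1) (he1 : ∫ z, e z ∂ν = 1) :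
    expNeg (klDiv ν p e) ≤ (∫ z, min (p z) (e z) ∂ν) * (2 - ∫ z, min (p z) (e z) ∂ν) := by
  have hp : Integrable p ν := .of_integral_ne_zero (by simp [hp1])
  have he : Integrable e ν := .of_integral_ne_zero (by simp [he1])
  rw [klDiv]
  split_ifs with h
  · rw [expNeg, if_neg ENNReal.ofReal_ne_top, ENNReal.toReal_ofReal']
    exact (Real.exp_le_exp.mpr (neg_le_neg (le_max_left _ _))).trans
      (exp_neg_integral_mul_log_div_le hpm hem hp0 he0 hp1 he1 h.1 h.2)
  · rw [expNeg, if_pos rfl]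
    have hm1 : ∫ z, min (p z) (e z) ∂ν ≤ 1 :=
      hp1 ▸ integral_mono (hp.inf he) hp fun z => min_le_left _ _
    exact mul_nonneg (integral_nonneg fun z => le_min (hp0 z) (he0 z)) (by linarith)

end

theorem risk_le_pace_risk_add_kl_general
    {Z : Type*} [MeasurableSpace Z] (ν : Measure Z)
    (p e : Z → ℝ) (hpm : Measurable p) (hem : Measurable e)
    (hp0 : ∀ z, 0 ≤ p z) (he0 : ∀ z, 0 ≤ e z)
    (hp1 : ∫ z, p z ∂ν = 1) (he1 : ∫ z, e z ∂ν = 1)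
    (α : ℝ) (hα1 : α ≤ 1)
    (L : Z → ℝ) (hLm : Measurable L) (hL0 : ∀ z, 0 ≤ L z) (hL1 : ∀ z, L z ≤ 1) :
    ∫ z, L z * p z ∂ν
      ≤ (∫ z, L z * (α * p z + (1 - α) * e z) ∂ν)
          + (1 - α) * Real.sqrt (1 - expNeg (klDiv ν p e)) := by
  have hp : Integrable p ν := .of_integral_ne_zero (by simp [hp1])
  have he : Integrable e ν := .of_integral_ne_zero (by simp [he1])
  have hLp := integrable_mul_of_nonneg_of_le_one hLm hL0 hL1 hp
  have hLe := integrable_mul_of_nonneg_of_le_one hLm hL0 hL1 he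
  have hmix : ∫ z, L z * (α * p z + (1 - α) * e z) ∂ν
      = α * ∫ z, L z * p z ∂ν + (1 - α) * ∫ z, L z * e z ∂ν := by
    simp_rw [mul_add, mul_left_comm (L _)]
    rw [integral_add (hLp.const_mul α) (hLe.const_mul (1 - α)), integral_const_mul,
      integral_const_mul]
  set m := ∫ z, min (p z) (e z) ∂ν
  have htv : ∫ z, L z * p z ∂ν - ∫ z, L z * e z ∂ν ≤ 1 - m :=
    hp1 ▸ integral_mul_sub_integral_mul_le hLm hL0 hL1 hp he
  have hbh := expNeg_klDiv_le hpm hem hp0 he0 hp1 he1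
  have hgap : ∫ z, L z * p z ∂ν - ∫ z, L z * e z ∂ν ≤ √(1 - expNeg (klDiv ν p e)) :=
    htv.trans ((le_abs_self _).trans (Real.abs_le_sqrt (by nlinarith)))
  rw [hmix]
  nlinarith [mul_le_mul_of_nonneg_left hgap (sub_nonneg.mpr hα1)]

/-- For probability densities `p, e` w.r.t. a σ-finite measure `ν`, `α ∈ [0,1]`,
the mixture `q = α p + (1-α) e`, and a measurable loss `0 ≤ L ≤ 1`:
`∫ L p dν ≤ ∫ L q dν + (1-α) √(1 - exp (-D_KL(p‖e)))`. -/
theorem risk_le_pace_risk_add_kl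
    {Z : Type*} [MeasurableSpace Z] (ν : Measure Z) [SigmaFinite ν]
    (p e : Z → ℝ) (hpm : Measurable p) (hem : Measurable e)
    (hp0 : ∀ z, 0 ≤ p z) (he0 : ∀ z, 0 ≤ e z)
    (hp1 : ∫ z, p z ∂ν = 1) (he1 : ∫ z, e z ∂ν = 1)
    (α : ℝ) (hα0 : 0 ≤ α) (hα1 : α ≤ 1)
    (L : Z → ℝ) (hLm : Measurable L) (hL0 : ∀ z, 0 ≤ L z) (hL1 : ∀ z, L z ≤ 1) :
    ∫ z, L z * p z ∂ν
      ≤ (∫ z, L z * (α * p z + (1 - α) * e z) ∂ν)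
          + (1 - α) * Real.sqrt (1 - expNeg (klDiv ν p e)) :=
  risk_le_pace_risk_add_kl_general ν p e hpm hem hp0 he0 hp1 he1 α hα1 L hLm hL0 hL1
end

section
/- Let p⁺, p⁻, e⁺, e⁻ be probability densities with respect to a σ-finite measure ν on a measurable space Z, let α ∈ [0,1], define the mixture densities q⁺ = α p⁺ + (1−α) e⁺ and q⁻ = α p⁻ + (1−α) e⁻, and let L : Z → ℝ be measurable with 0 ≤ L(z) ≤ 1 for all z. Then (1/2) ∫ L p⁺ dν + (1/2) ∫ L p⁻ dν ≤ (1/2) ∫ L q⁺ dν + (1/2) ∫ L q⁻ dν + (1−α) √(1 − exp(−D_KL(p⁺‖e⁺))) + (1−α) √(1 − exp(−D_KL(p⁻‖e⁻))). -/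
open MeasureTheory
open scoped Classical ENNReal

/-! Write `s = ∫ min p e` for the overlap and `ρ = ∫ √(p e)` for the Bhattacharyya coefficient
of two probability densities. A loss with values in `[0, 1]` separates `p` from `e` by at most
the total variation `1 - s`. Cauchy–Schwarz applied to `min p e · max p e = p e` gives
`ρ² ≤ s (2 - s)`, that is `(1 - s)² ≤ 1 - ρ²`, and `log y ≤ y - 1` gives
`D_KL(p‖e) ≥ 2 (1 - ρ)`; together they bound `1 - s` by `2 √(1 - exp (-D_KL(p‖e)))`. In the
pace distribution the clean density carries weight `α`, so only the share `1 - α` of this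
bound is paid in each class. -/

open Real

lemma expNeg_top : expNeg ∞ = 0 := if_pos rfl

lemma expNeg_ofReal {x : ℝ} (hx : 0 ≤ x) : expNeg (ENNReal.ofReal x) = exp (-x) := by
  rw [expNeg, if_neg ENNReal.ofReal_ne_top, ENNReal.toReal_ofReal hx]

namespace Real

/-- `log y ≤ y - 1` at `y = √(e / p)`. -/
lemma two_mul_sub_sqrt_mul_le_mul_log {p e : ℝ} (hp : 0 ≤ p) (he : 0 ≤ e) (hep : e = 0 → p = 0) :
    2 * (p - √(p * e)) ≤ p * log (p / e) := by
  rcases hp.eq_or_lt with rfl | hp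
  · simp
  have he : 0 < e := he.lt_of_ne fun h => hp.ne' (hep h.symm)
  have hlog : log √(e / p) ≤ √(e / p) - 1 := log_le_sub_one_of_pos (by positivity)
  rw [log_sqrt (by positivity), log_div he.ne' hp.ne'] at hlog
  have hsqrt : p * √(e / p) = √(p * e) := by
    rw [← sqrt_sq hp.le, ← sqrt_mul (sq_nonneg p), sqrt_sq hp.le]
    congr 1
    field_simp
  rw [log_div hp.ne' he.ne', ← hsqrt]
  nlinarith

lemma le_two_mul_sqrt_one_sub_exp_neg {t ρ D : ℝ} (ht : t ^ 2 ≤ 1 - ρ ^ 2)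
    (hD : 2 * (1 - ρ) ≤ D) : t ≤ 2 * √(1 - exp (-D)) := by
  have hρ : ρ ≤ 1 := by nlinarith
  have h3 : 0 < 3 - 2 * ρ := by linarith
  -- `exp (-D) ≤ exp (-2 (1 - ρ)) ≤ 1 / (1 + 2 (1 - ρ))`
  have hexp : exp (-D) * (3 - 2 * ρ) ≤ 1 := by
    have h1 : exp (-D) * exp (2 * (1 - ρ)) ≤ 1 := by
      rw [← exp_add, exp_le_one_iff]; linarith
    nlinarith [add_one_le_exp (2 * (1 - ρ)), exp_pos (-D)]
  have key : t ^ 2 ≤ (2 * √(1 - exp (-D))) ^ 2 := by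
    rw [mul_pow, sq_sqrt (by nlinarith [exp_pos (-D)])]
    nlinarith [exp_pos (-D)]
  exact abs_le_of_sq_le_sq' key (by positivity) |>.2

end Real

section Densities

variable {Z : Type*} [MeasurableSpace Z] {ν : Measure Z} {p e : Z → ℝ}

lemma integrable_sqrt_mul_s13 (hp : Integrable p ν) (he : Integrable e ν)
    (hp0 : ∀ z, 0 ≤ p z) (he0 : ∀ z, 0 ≤ e z) : Integrable (fun z => √(p z * e z)) ν := by
  refine (hp.add he).mono' (hp.aemeasurable.mul he.aemeasurable).sqrt.aestronglyMeasurable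
    (ae_of_all _ fun z => ?_)
  have hpe : p z * e z ≤ (p z + e z) ^ 2 := by nlinarith [hp0 z, he0 z]
  rw [Pi.add_apply, norm_of_nonneg (sqrt_nonneg _), ← sqrt_sq (add_nonneg (hp0 z) (he0 z))]
  exact sqrt_le_sqrt hpe

/-- Cauchy–Schwarz applied to `√p` and `√e`. -/
lemma sq_integral_sqrt_mul_le (hp : Integrable p ν) (he : Integrable e ν)
    (hp0 : ∀ z, 0 ≤ p z) (he0 : ∀ z, 0 ≤ e z) :
    (∫ z, √(p z * e z) ∂ν) ^ 2 ≤ (∫ z, p z ∂ν) * ∫ z, e z ∂ν := by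
  have hsq {f : Z → ℝ} (hf0 : ∀ z, 0 ≤ f z) : ∀ z, √(f z) ^ (2 : ℝ) = f z := fun z => by
    rw [rpow_two, sq_sqrt (hf0 z)]
  have hmemLp {f : Z → ℝ} (hf : Integrable f ν) (hf0 : ∀ z, 0 ≤ f z) :
      MemLp (fun z => √(f z)) (ENNReal.ofReal 2) ν := by
    rw [ENNReal.ofReal_ofNat, memLp_two_iff_integrable_sq hf.aemeasurable.sqrt.aestronglyMeasurable]
    exact hf.congr (ae_of_all _ fun z => (sq_sqrt (hf0 z)).symm)
  have holder := integral_mul_le_Lp_mul_Lq_of_nonneg HolderConjugate.two_two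
    (ae_of_all _ fun z => sqrt_nonneg (p z)) (ae_of_all _ fun z => sqrt_nonneg (e z))
    (hmemLp hp hp0) (hmemLp he he0)
  simp only [hsq hp0, hsq he0, ← sqrt_mul (hp0 _), ← sqrt_eq_rpow] at holder
  calc (∫ z, √(p z * e z) ∂ν) ^ 2
      ≤ (√(∫ z, p z ∂ν) * √(∫ z, e z ∂ν)) ^ 2 :=
        pow_le_pow_left₀ (integral_nonneg fun z => sqrt_nonneg _) holder 2
    _ = (∫ z, p z ∂ν) * ∫ z, e z ∂ν := by
        rw [mul_pow, sq_sqrt (integral_nonneg hp0), sq_sqrt (integral_nonneg he0)]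

lemma sq_integral_sqrt_mul_le_integral_min_mul (hp : Integrable p ν) (he : Integrable e ν)
    (hp0 : ∀ z, 0 ≤ p z) (he0 : ∀ z, 0 ≤ e z) :
    (∫ z, √(p z * e z) ∂ν) ^ 2 ≤
      (∫ z, min (p z) (e z) ∂ν) * (∫ z, p z ∂ν + ∫ z, e z ∂ν - ∫ z, min (p z) (e z) ∂ν) := by
  have hmin : Integrable (fun z => min (p z) (e z)) ν := hp.inf he
  have hmax : Integrable (fun z => max (p z) (e z)) ν := hp.sup he
  have hsum : ∫ z, max (p z) (e z) ∂ν = ∫ z, p z ∂ν + ∫ z, e z ∂ν - ∫ z, min (p z) (e z) ∂ν := by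
    rw [← integral_add hp he, ← integral_sub (by exact hp.add he) hmin]
    exact integral_congr_ae (ae_of_all _ fun z => by simp only; linarith [min_add_max (p z) (e z)])
  have hmul : ∀ z, min (p z) (e z) * max (p z) (e z) = p z * e z := fun z => by
    rcases le_total (p z) (e z) with h | h <;> simp [h, mul_comm]
  simpa only [hmul, hsum] using sq_integral_sqrt_mul_le hmin hmax
    (fun z => le_min (hp0 z) (he0 z)) (fun z => le_max_of_le_left (hp0 z))

lemma ae_imp_eq_zero_of_withDensity_ofReal_absolutelyContinuous (hp : AEMeasurable p ν)
    (he : AEMeasurable e ν) (hp0 : ∀ z, 0 ≤ p z)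
    (hac : (ν.withDensity fun z => ENNReal.ofReal (p z)) ≪
      ν.withDensity fun z => ENNReal.ofReal (e z)) :
    ∀ᵐ z ∂ν, e z = 0 → p z = 0 := by
  have hpos : ∀ᵐ z ∂ν.withDensity (fun z => ENNReal.ofReal (e z)), ENNReal.ofReal (e z) ≠ 0 :=
    (ae_withDensity_iff' he.ennreal_ofReal).2 (ae_of_all _ fun _ => id)
  filter_upwards [(ae_withDensity_iff' hp.ennreal_ofReal).1 (hac.ae_le hpos)] with z hz hez
  by_contra hpz
  exact hz (by simpa using (hp0 z).lt_of_ne' hpz) (by simp [hez])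

/-- The Kullback–Leibler divergence dominates twice the squared Hellinger distance. -/
lemma two_mul_sub_integral_sqrt_mul_le_integral_mul_log (hp : Integrable p ν)
    (he : Integrable e ν) (hp0 : ∀ z, 0 ≤ p z) (he0 : ∀ z, 0 ≤ e z)
    (hep : ∀ᵐ z ∂ν, e z = 0 → p z = 0)
    (hlog : Integrable (fun z => p z * log (p z / e z)) ν) :
    2 * (∫ z, p z ∂ν - ∫ z, √(p z * e z) ∂ν) ≤ ∫ z, p z * log (p z / e z) ∂ν := by
  rw [← integral_sub hp (integrable_sqrt_mul_s13 hp he hp0 he0), ← integral_const_mul]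
  refine integral_mono_ae ((hp.sub (integrable_sqrt_mul_s13 hp he hp0 he0)).const_mul 2) hlog ?_
  filter_upwards [hep] with z hz
  exact two_mul_sub_sqrt_mul_le_mul_log (hp0 z) (he0 z) hz

lemma integral_mul_sub_integral_mul_le_sub_integral_min {L : Z → ℝ}
    (hp : Integrable p ν) (he : Integrable e ν) (hL : AEStronglyMeasurable L ν)
    (hL0 : ∀ z, 0 ≤ L z) (hL1 : ∀ z, L z ≤ 1) :
    ∫ z, L z * p z ∂ν - ∫ z, L z * e z ∂ν ≤ ∫ z, p z ∂ν - ∫ z, min (p z) (e z) ∂ν := by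
  have hbdd : ∀ᵐ z ∂ν, ‖L z‖ ≤ 1 :=
    ae_of_all _ fun z => by rw [norm_of_nonneg (hL0 z)]; exact hL1 z
  have hmin : Integrable (fun z => min (p z) (e z)) ν := hp.inf he
  rw [← integral_sub (hp.bdd_mul hL hbdd) (he.bdd_mul hL hbdd), ← integral_sub hp hmin]
  refine integral_mono ((hp.bdd_mul hL hbdd).sub (he.bdd_mul hL hbdd)) (hp.sub hmin) fun z => ?_
  rcases le_total (p z) (e z) with h | h
  · simp only [min_eq_left h]; nlinarith [hL0 z]
  · simp only [min_eq_right h]; nlinarith [hL1 z]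

lemma integral_mul_sub_integral_mul_le_two_mul_sqrt_one_sub_expNeg_klDiv {L : Z → ℝ}
    (hp0 : ∀ z, 0 ≤ p z) (he0 : ∀ z, 0 ≤ e z) (hp1 : ∫ z, p z ∂ν = 1) (he1 : ∫ z, e z ∂ν = 1)
    (hL : AEStronglyMeasurable L ν) (hL0 : ∀ z, 0 ≤ L z) (hL1 : ∀ z, L z ≤ 1) :
    ∫ z, L z * p z ∂ν - ∫ z, L z * e z ∂ν ≤ 2 * √(1 - expNeg (klDiv ν p e)) := by
  have hp : Integrable p ν := .of_integral_ne_zero (by simp [hp1])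
  have he : Integrable e ν := .of_integral_ne_zero (by simp [he1])
  have hrisk := integral_mul_sub_integral_mul_le_sub_integral_min hp he hL hL0 hL1
  have hmin_nonneg : 0 ≤ ∫ z, min (p z) (e z) ∂ν := integral_nonneg fun z => le_min (hp0 z) (he0 z)
  rw [klDiv]
  split_ifs with h
  · obtain ⟨hac, hlog⟩ := h
    have hCS := sq_integral_sqrt_mul_le_integral_min_mul hp he hp0 he0
    have hKL := two_mul_sub_integral_sqrt_mul_le_integral_mul_log hp he hp0 he0
      (ae_imp_eq_zero_of_withDensity_ofReal_absolutelyContinuous hp.aemeasurable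
        he.aemeasurable hp0 hac) hlog
    simp only [hp1, he1] at hCS hKL hrisk
    set s := ∫ z, min (p z) (e z) ∂ν
    set ρ := ∫ z, √(p z * e z) ∂ν
    have hTV : (1 - s) ^ 2 ≤ 1 - ρ ^ 2 := by linarith
    have hρ : ρ ≤ 1 := by nlinarith
    rw [expNeg_ofReal (by linarith)]
    linarith [le_two_mul_sqrt_one_sub_exp_neg hTV hKL]
  · rw [expNeg_top, sub_zero, sqrt_one]
    linarith

lemma integral_mul_le_integral_mul_mixture_add {L : Z → ℝ}
    (hp0 : ∀ z, 0 ≤ p z) (he0 : ∀ z, 0 ≤ e z) (hp1 : ∫ z, p z ∂ν = 1) (he1 : ∫ z, e z ∂ν = 1)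
    {α : ℝ} (hα1 : α ≤ 1) (hL : AEStronglyMeasurable L ν) (hL0 : ∀ z, 0 ≤ L z)
    (hL1 : ∀ z, L z ≤ 1) :
    1 / 2 * ∫ z, L z * p z ∂ν ≤ 1 / 2 * ∫ z, L z * (α * p z + (1 - α) * e z) ∂ν
      + (1 - α) * √(1 - expNeg (klDiv ν p e)) := by
  have hbdd : ∀ᵐ z ∂ν, ‖L z‖ ≤ 1 :=
    ae_of_all _ fun z => by rw [norm_of_nonneg (hL0 z)]; exact hL1 z
  have hLp : Integrable (fun z => L z * p z) ν :=
    (Integrable.of_integral_ne_zero (by simp [hp1])).bdd_mul hL hbdd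
  have hLe : Integrable (fun z => L z * e z) ν :=
    (Integrable.of_integral_ne_zero (by simp [he1])).bdd_mul hL hbdd
  have hmix : ∫ z, L z * (α * p z + (1 - α) * e z) ∂ν
      = α * ∫ z, L z * p z ∂ν + (1 - α) * ∫ z, L z * e z ∂ν := by
    rw [← integral_const_mul, ← integral_const_mul, ← integral_add (hLp.const_mul _)
      (hLe.const_mul _)]
    exact integral_congr_ae (ae_of_all _ fun z => by ring)
  have hone_class := mul_le_mul_of_nonneg_left
    (integral_mul_sub_integral_mul_le_two_mul_sqrt_one_sub_expNeg_klDiv hp0 he0 hp1 he1 hL hL0 hL1)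
    (sub_nonneg.2 hα1)
  rw [hmix]
  linarith

end Densities

theorem clean_risk_le_pace_risk_add_kl_two_class_general
    {Z : Type*} [MeasurableSpace Z] (ν : Measure Z)
    (pp pm ep em : Z → ℝ)
    (hpp0 : ∀ z, 0 ≤ pp z) (hpm0 : ∀ z, 0 ≤ pm z)
    (hep0 : ∀ z, 0 ≤ ep z) (hem0 : ∀ z, 0 ≤ em z)
    (hpp1 : ∫ z, pp z ∂ν = 1) (hpm1 : ∫ z, pm z ∂ν = 1)
    (hep1 : ∫ z, ep z ∂ν = 1) (hem1 : ∫ z, em z ∂ν = 1)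
    (α : ℝ) (hα1 : α ≤ 1)
    (L : Z → ℝ) (hLm : Measurable L) (hL0 : ∀ z, 0 ≤ L z) (hL1 : ∀ z, L z ≤ 1) :
    (1 / 2) * (∫ z, L z * pp z ∂ν) + (1 / 2) * (∫ z, L z * pm z ∂ν)
      ≤ (1 / 2) * (∫ z, L z * (α * pp z + (1 - α) * ep z) ∂ν)
          + (1 / 2) * (∫ z, L z * (α * pm z + (1 - α) * em z) ∂ν)
          + (1 - α) * Real.sqrt (1 - expNeg (klDiv ν pp ep))
          + (1 - α) * Real.sqrt (1 - expNeg (klDiv ν pm em)) := by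
  have hplus := integral_mul_le_integral_mul_mixture_add hpp0 hep0 hpp1 hep1 hα1
    hLm.aestronglyMeasurable hL0 hL1
  have hminus := integral_mul_le_integral_mul_mixture_add hpm0 hem0 hpm1 hem1 hα1
    hLm.aestronglyMeasurable hL0 hL1
  linarith

/-- Distributional core of Theorem 1: for clean class-conditional densities `p⁺, p⁻`,
error densities `e⁺, e⁻`, mixing weight `α ∈ [0,1]` with pace densities
`q± = α p± + (1-α) e±`, and a measurable loss `0 ≤ L ≤ 1`:
`(1/2)∫ L p⁺ + (1/2)∫ L p⁻ ≤ (1/2)∫ L q⁺ + (1/2)∫ L q⁻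
  + (1-α)√(1 - exp(-D_KL(p⁺‖e⁺))) + (1-α)√(1 - exp(-D_KL(p⁻‖e⁻)))`. -/
theorem clean_risk_le_pace_risk_add_kl_two_class
    {Z : Type*} [MeasurableSpace Z] (ν : Measure Z) [SigmaFinite ν]
    (pp pm ep em : Z → ℝ)
    (hppm : Measurable pp) (hpmm : Measurable pm)
    (hepm : Measurable ep) (hemm : Measurable em)
    (hpp0 : ∀ z, 0 ≤ pp z) (hpm0 : ∀ z, 0 ≤ pm z)
    (hep0 : ∀ z, 0 ≤ ep z) (hem0 : ∀ z, 0 ≤ em z)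
    (hpp1 : ∫ z, pp z ∂ν = 1) (hpm1 : ∫ z, pm z ∂ν = 1)
    (hep1 : ∫ z, ep z ∂ν = 1) (hem1 : ∫ z, em z ∂ν = 1)
    (α : ℝ) (hα0 : 0 ≤ α) (hα1 : α ≤ 1)
    (L : Z → ℝ) (hLm : Measurable L) (hL0 : ∀ z, 0 ≤ L z) (hL1 : ∀ z, L z ≤ 1) :
    (1 / 2) * (∫ z, L z * pp z ∂ν) + (1 / 2) * (∫ z, L z * pm z ∂ν)
      ≤ (1 / 2) * (∫ z, L z * (α * pp z + (1 - α) * ep z) ∂ν)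
          + (1 / 2) * (∫ z, L z * (α * pm z + (1 - α) * em z) ∂ν)
          + (1 - α) * Real.sqrt (1 - expNeg (klDiv ν pp ep))
          + (1 - α) * Real.sqrt (1 - expNeg (klDiv ν pm em)) :=
  clean_risk_le_pace_risk_add_kl_two_class_general ν pp pm ep em hpp0 hpm0 hep0 hem0 hpp1 hpm1 hep1
    hem1 α hα1 L hLm hL0 hL1
end
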